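/- Let K ≥ 1 and let A_1, A_2, A_3, A_4 ⊆ F_2^n be nonempty sets that are coherently (1/√(2K))-flat (for every ξ, either ξ ∈ Spec_{9/10}(A_i) for all i, or ξ ∉ Spec_{1/√(2K)}(A_i) for all i) and satisfy ω(A_1,A_2,A_3,A_4) ≥ 1/K. Then there is a linear subspace H ⊆ F_2^n with |H| ≥ (4/5)·∏_{i=1}^4 |A_i|^{1/4}, and elements x_1,x_2,x_3,x_4 ∈ F_2^n, such that ∏_{i=1}^4 |A_i ∩ (x_i + H)|^{1/4} ≥ |H|/(2K). -/
import Mathlib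


open Finset
open scoped Classical

/-- Fourier transform of the indicator of A ⊆ 𝔽₂ⁿ. -/
noncomputable def ftA {n : ℕ} (A : Finset (Fin n → ZMod 2)) (ξ : Fin n → ZMod 2) : ℝ :=
  ((2 : ℝ) ^ n)⁻¹ * ∑ x ∈ A, (-1 : ℝ) ^ (∑ i, ξ i * x i : ZMod 2).val

/-- Spec_α(A) := {ξ : |1̂_A(ξ)| ≥ α|A|/2ⁿ}. -/
noncomputable def Spec {n : ℕ} (α : ℝ) (A : Finset (Fin n → ZMod 2)) :
    Set (Fin n → ZMod 2) :=
  {ξ | α * A.card / 2 ^ n ≤ |ftA A ξ|}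

/-- Normalised energy ω(A₁,A₂,A₃,A₄). -/
noncomputable def omegaE {n : ℕ} (A1 A2 A3 A4 : Finset (Fin n → ZMod 2)) : ℝ :=
  ((((A1 ×ˢ A2) ×ˢ (A3 ×ˢ A4)).filter
      (fun p => p.1.1 + p.1.2 + p.2.1 + p.2.2 = 0)).card : ℝ) /
    ((A1.card : ℝ) * A2.card * A3.card * A4.card) ^ ((3 : ℝ) / 4)

namespace Stmt16Aux

variable {n : ℕ}

noncomputable def ee (ξ x : Fin n → ZMod 2) : ℝ :=
  (-1 : ℝ) ^ (∑ i, ξ i * x i : ZMod 2).val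

noncomputable def SS (A : Finset (Fin n → ZMod 2)) (ξ : Fin n → ZMod 2) : ℝ :=
  ∑ a ∈ A, ee ξ a

lemma zmod2_cases : ∀ a : ZMod 2, a = 0 ∨ a = 1 := by decide

lemma neg_one_pow_val_add (a b : ZMod 2) :
    (-1 : ℝ) ^ (a + b).val = (-1 : ℝ) ^ a.val * (-1 : ℝ) ^ b.val := by
  rw [ZMod.val_add, ← neg_one_pow_eq_pow_mod_two, pow_add]

lemma ee_add_left (ξ η x : Fin n → ZMod 2) : ee (ξ + η) x = ee ξ x * ee η x := by
  unfold ee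
  rw [show (∑ i, (ξ + η) i * x i : ZMod 2) = (∑ i, ξ i * x i) + ∑ i, η i * x i by
    rw [← Finset.sum_add_distrib]
    exact Finset.sum_congr rfl fun i _ => by simp [add_mul]]
  exact neg_one_pow_val_add _ _

lemma ee_add_right (ξ x y : Fin n → ZMod 2) : ee ξ (x + y) = ee ξ x * ee ξ y := by
  unfold ee
  rw [show (∑ i, ξ i * (x + y) i : ZMod 2) = (∑ i, ξ i * x i) + ∑ i, ξ i * y i by
    rw [← Finset.sum_add_distrib]
    exact Finset.sum_congr rfl fun i _ => by simp [mul_add]]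
  exact neg_one_pow_val_add _ _

lemma ee_zero_left (x : Fin n → ZMod 2) : ee 0 x = 1 := by
  unfold ee; simp

lemma ee_zero_right (ξ : Fin n → ZMod 2) : ee ξ 0 = 1 := by
  unfold ee; simp

lemma ee_comm (ξ x : Fin n → ZMod 2) : ee ξ x = ee x ξ := by
  unfold ee
  congr 2
  exact Finset.sum_congr rfl fun i _ => mul_comm _ _

lemma ee_pm (ξ x : Fin n → ZMod 2) : ee ξ x = 1 ∨ ee ξ x = -1 := by
  unfold ee
  rcases Nat.even_or_odd ((∑ i, ξ i * x i : ZMod 2)).val with h | h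
  · left; exact h.neg_one_pow
  · right; exact h.neg_one_pow

lemma ee_eq_one_iff (ξ x : Fin n → ZMod 2) :
    ee ξ x = 1 ↔ (∑ i, ξ i * x i : ZMod 2) = 0 := by
  unfold ee
  rcases zmod2_cases (∑ i, ξ i * x i : ZMod 2) with h | h <;> rw [h] <;> simp
  · norm_num [ZMod.val_one]

lemma abs_ee (ξ x : Fin n → ZMod 2) : |ee ξ x| = 1 := by
  rcases ee_pm ξ x with h | h <;> rw [h] <;> norm_num

lemma vadd_self (x : Fin n → ZMod 2) : x + x = 0 :=
  funext fun i => CharTwo.add_self_eq_zero (x i)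

lemma vadd_eq_zero_iff (x y : Fin n → ZMod 2) : x + y = 0 ↔ y = x := by
  constructor
  · intro h
    have := congrArg (fun z => x + z) h
    simp only [← add_assoc, vadd_self, zero_add, add_zero] at this
    exact this
  · intro h; rw [h, vadd_self]

lemma card_univ_G : ((Finset.univ : Finset (Fin n → ZMod 2)).card : ℝ) = (2:ℝ)^n := by
  rw [Finset.card_univ]
  simp

lemma SS_zero (A : Finset (Fin n → ZMod 2)) : SS A 0 = A.card := by
  unfold SS
  rw [Finset.sum_congr rfl fun a _ => ee_zero_left a]
  simp

lemma abs_SS_le (A : Finset (Fin n → ZMod 2)) (ξ : Fin n → ZMod 2) :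
    |SS A ξ| ≤ A.card := by
  calc |SS A ξ| ≤ ∑ a ∈ A, |ee ξ a| := Finset.abs_sum_le_sum_abs _ _
  _ = A.card := by simp [abs_ee]

lemma zmod2_ne_zero : ∀ a : ZMod 2, a ≠ 0 → a = 1 := by decide

lemma sum_ee_right (ξ : Fin n → ZMod 2) :
    ∑ x : Fin n → ZMod 2, ee ξ x = if ξ = 0 then (2:ℝ)^n else 0 := by
  split_ifs with h
  · subst h
    rw [Finset.sum_congr rfl fun x _ => ee_zero_left x]
    rw [Finset.sum_const, nsmul_eq_mul, mul_one, card_univ_G]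
  · obtain ⟨i, hi⟩ : ∃ i, ξ i ≠ 0 := by
      by_contra hc; push_neg at hc; exact h (funext hc)
    have hξi : ξ i = 1 := zmod2_ne_zero _ hi
    set c : Fin n → ZMod 2 := Pi.single i 1 with hc_def
    have hec : ee ξ c = -1 := by
      have hb : (∑ j, ξ j * c j : ZMod 2) = 1 := by
        rw [Finset.sum_eq_single i]
        · rw [hc_def]; simp [hξi]
        · intro j _ hj; rw [hc_def]; simp [Pi.single_eq_of_ne hj]
        · intro hmem; exact absurd (Finset.mem_univ i) hmem
      unfold ee
      rw [hb]
      norm_num [ZMod.val_one]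
    have key : ∑ x : Fin n → ZMod 2, ee ξ x = ∑ x : Fin n → ZMod 2, ee ξ (x + c) :=
      (Fintype.sum_equiv (Equiv.addRight c) _ _ (fun x => rfl)).symm
    have key2 : ∑ x : Fin n → ZMod 2, ee ξ (x + c) = - ∑ x : Fin n → ZMod 2, ee ξ x := by
      rw [Finset.sum_congr rfl fun x _ => by rw [ee_add_right, hec]]
      rw [← Finset.sum_neg_distrib]
      exact Finset.sum_congr rfl fun x _ => by ring
    linarith [key, key2, key.symm ▸ key2]

lemma sum_ee_left (z : Fin n → ZMod 2) :
    ∑ ξ : Fin n → ZMod 2, ee ξ z = if z = 0 then (2:ℝ)^n else 0 := by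
  rw [Finset.sum_congr rfl fun ξ _ => ee_comm ξ z]
  exact sum_ee_right z

lemma sum_SS_sq (A : Finset (Fin n → ZMod 2)) :
    ∑ ξ : Fin n → ZMod 2, (SS A ξ)^2 = (2:ℝ)^n * A.card := by
  have step1 : ∀ ξ : Fin n → ZMod 2, (SS A ξ)^2 = ∑ a ∈ A, ∑ b ∈ A, ee ξ (a + b) := by
    intro ξ
    rw [sq, SS, Finset.sum_mul_sum]
    exact Finset.sum_congr rfl fun a _ => Finset.sum_congr rfl fun b _ =>
      (ee_add_right ξ a b).symm
  calc ∑ ξ : Fin n → ZMod 2, (SS A ξ)^2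
      = ∑ ξ : Fin n → ZMod 2, ∑ a ∈ A, ∑ b ∈ A, ee ξ (a + b) :=
        Finset.sum_congr rfl fun ξ _ => step1 ξ
    _ = ∑ a ∈ A, ∑ b ∈ A, ∑ ξ : Fin n → ZMod 2, ee ξ (a + b) := by
        rw [Finset.sum_comm]
        exact Finset.sum_congr rfl fun a _ => Finset.sum_comm
    _ = ∑ a ∈ A, ∑ b ∈ A, (if b = a then (2:ℝ)^n else 0) := by
        refine Finset.sum_congr rfl fun a _ => Finset.sum_congr rfl fun b _ => ?_
        rw [sum_ee_left]
        congr 1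
        simp [vadd_eq_zero_iff]
    _ = ∑ a ∈ A, (2:ℝ)^n := by
        refine Finset.sum_congr rfl fun a ha => ?_
        rw [Finset.sum_ite_eq' A a (fun _ => (2:ℝ)^n), if_pos ha]
    _ = (2:ℝ)^n * A.card := by
        rw [Finset.sum_const, nsmul_eq_mul, mul_comm]

lemma sum_pm (A : Finset (Fin n → ZMod 2)) (h : (Fin n → ZMod 2) → ℝ)
    (hpm : ∀ x, h x = 1 ∨ h x = -1) :
    ∑ x ∈ A, h x = A.card - 2 * (A.filter (fun x => h x = -1)).card := by
  have hsplit := Finset.sum_filter_add_sum_filter_not A (fun x => h x = -1) h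
  have h1 : ∑ x ∈ A.filter (fun x => h x = -1), h x
      = -((A.filter (fun x => h x = -1)).card : ℝ) := by
    rw [Finset.sum_congr rfl (fun x hx => (Finset.mem_filter.1 hx).2)]
    simp
  have h2 : ∑ x ∈ A.filter (fun x => ¬ h x = -1), h x
      = ((A.filter (fun x => ¬ h x = -1)).card : ℝ) := by
    rw [Finset.sum_congr rfl (fun x hx => (hpm x).resolve_right (Finset.mem_filter.1 hx).2)]
    simp
  have h3 := Finset.card_filter_add_card_filter_not (s := A) (p := fun x => h x = -1)
  have h3' : ((A.filter (fun x => h x = -1)).card : ℝ)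
      + ((A.filter (fun x => ¬ h x = -1)).card : ℝ) = (A.card : ℝ) := by
    exact_mod_cast congrArg (Nat.cast : ℕ → ℝ) h3
  rw [h1, h2] at hsplit
  linarith

lemma key08 (A : Finset (Fin n → ZMod 2)) (ξ η : Fin n → ZMod 2)
    (hξ : (9/10 : ℝ) * A.card ≤ |SS A ξ|) (hη : (9/10 : ℝ) * A.card ≤ |SS A η|) :
    (8/10 : ℝ) * A.card ≤ |SS A (ξ + η)| := by
  set a : ℝ := (A.card : ℝ) with ha_def
  have ha0 : 0 ≤ a := Nat.cast_nonneg _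
  set ε : ℝ := if 0 ≤ SS A ξ then 1 else -1 with hε_def
  set δ : ℝ := if 0 ≤ SS A η then 1 else -1 with hδ_def
  have hεs : ε * SS A ξ = |SS A ξ| := by
    rw [hε_def]; split_ifs with h
    · rw [one_mul, abs_of_nonneg h]
    · rw [abs_of_neg (lt_of_not_ge h)]; ring
  have hδs : δ * SS A η = |SS A η| := by
    rw [hδ_def]; split_ifs with h
    · rw [one_mul, abs_of_nonneg h]
    · rw [abs_of_neg (lt_of_not_ge h)]; ring
  have hεpm : ε = 1 ∨ ε = -1 := by rw [hε_def]; split_ifs <;> simp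
  have hδpm : δ = 1 ∨ δ = -1 := by rw [hδ_def]; split_ifs <;> simp
  set f : (Fin n → ZMod 2) → ℝ := fun x => ε * ee ξ x with hf_def
  set g : (Fin n → ZMod 2) → ℝ := fun x => δ * ee η x with hg_def
  set u : (Fin n → ZMod 2) → ℝ := fun x => (ε * δ) * ee (ξ + η) x with hu_def
  have hfpm : ∀ x, f x = 1 ∨ f x = -1 := by
    intro x; rw [hf_def]
    rcases hεpm with h | h <;> rcases ee_pm ξ x with h' | h' <;> simp [h, h']
  have hgpm : ∀ x, g x = 1 ∨ g x = -1 := by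
    intro x; rw [hg_def]
    rcases hδpm with h | h <;> rcases ee_pm η x with h' | h' <;> simp [h, h']
  have hupm : ∀ x, u x = 1 ∨ u x = -1 := by
    intro x; rw [hu_def]
    rcases hεpm with h | h <;> rcases hδpm with h2 | h2 <;>
      rcases ee_pm (ξ + η) x with h' | h' <;> simp [h, h2, h']
  have hfu : ∀ x, u x = f x * g x := by
    intro x
    rw [hu_def, hf_def, hg_def]
    simp only []
    rw [ee_add_left]; ring
  have hsf : ∑ x ∈ A, f x = |SS A ξ| := by
    rw [hf_def]
    simp only []
    rw [← Finset.mul_sum, ← SS, hεs]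
  have hsg : ∑ x ∈ A, g x = |SS A η| := by
    rw [hg_def]
    simp only []
    rw [← Finset.mul_sum, ← SS, hδs]
  have hsu : ∑ x ∈ A, u x = (ε * δ) * SS A (ξ + η) := by
    rw [hu_def]
    simp only []
    rw [← Finset.mul_sum, ← SS]
  set m1 : ℝ := ((A.filter (fun x => f x = -1)).card : ℝ) with hm1_def
  set m2 : ℝ := ((A.filter (fun x => g x = -1)).card : ℝ) with hm2_def
  set m3 : ℝ := ((A.filter (fun x => u x = -1)).card : ℝ) with hm3_def
  have hc1 : m1 ≤ a/20 := by
    have := sum_pm A f hfpm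
    rw [hsf] at this
    rw [hm1_def]; linarith
  have hc2 : m2 ≤ a/20 := by
    have := sum_pm A g hgpm
    rw [hsg] at this
    rw [hm2_def]; linarith
  have hsub : A.filter (fun x => u x = -1)
      ⊆ (A.filter (fun x => f x = -1)) ∪ (A.filter (fun x => g x = -1)) := by
    intro x hx
    rcases Finset.mem_filter.1 hx with ⟨hxA, hxu⟩
    rcases hfpm x with hf1 | hf1
    · rcases hgpm x with hg1 | hg1
      · exfalso
        rw [hfu x, hf1, hg1] at hxu
        norm_num at hxu
      · exact Finset.mem_union_right _ (Finset.mem_filter.2 ⟨hxA, hg1⟩)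
    · exact Finset.mem_union_left _ (Finset.mem_filter.2 ⟨hxA, hf1⟩)
  have hc3 : m3 ≤ m1 + m2 := by
    rw [hm3_def, hm1_def, hm2_def]
    have := le_trans (Finset.card_le_card hsub) (Finset.card_union_le _ _)
    exact_mod_cast this
  have hsum3 : ∑ x ∈ A, u x = a - 2 * m3 := by rw [sum_pm A u hupm]
  have habs : (ε * δ) * SS A (ξ + η) ≤ |SS A (ξ + η)| := by
    rcases hεpm with h | h <;> rcases hδpm with h2 | h2 <;>
      simp [h, h2, le_abs_self, neg_abs_le, neg_le, abs_le]
    all_goals cases abs_cases (SS A (ξ + η)) <;> linarith [abs_nonneg (SS A (ξ + η)), le_abs_self (SS A (ξ + η)), neg_abs_le (SS A (ξ + η))]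
  have : (ε * δ) * SS A (ξ + η) = a - 2 * m3 := by rw [← hsu, hsum3]
  linarith

section VLemmas

variable (V : Finset (Fin n → ZMod 2))

lemma sum_V (h0 : (0 : Fin n → ZMod 2) ∈ V)
    (hadd : ∀ ξ ∈ V, ∀ η ∈ V, ξ + η ∈ V) (z : Fin n → ZMod 2) :
    ∑ ξ ∈ V, ee ξ z = if (∀ ξ ∈ V, ee ξ z = 1) then (V.card : ℝ) else 0 := by
  split_ifs with h
  · rw [Finset.sum_congr rfl h, Finset.sum_const, nsmul_eq_mul, mul_one]
  · push_neg at h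
    obtain ⟨ξ₀, hξ₀V, hξ₀⟩ := h
    have he0 : ee ξ₀ z = -1 := (ee_pm ξ₀ z).resolve_left hξ₀
    have key : ∑ ξ ∈ V, ee (ξ + ξ₀) z = ∑ ξ ∈ V, ee ξ z := by
      apply Finset.sum_nbij' (fun ξ => ξ + ξ₀) (fun ξ => ξ + ξ₀)
      · intro ξ hξ; exact hadd ξ hξ ξ₀ hξ₀V
      · intro ξ hξ; exact hadd ξ hξ ξ₀ hξ₀V
      · intro ξ _; rw [add_assoc, vadd_self, add_zero]
      · intro ξ _; rw [add_assoc, vadd_self, add_zero]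
      · intro ξ _; rfl
    have key2 : ∑ ξ ∈ V, ee (ξ + ξ₀) z = - ∑ ξ ∈ V, ee ξ z := by
      have ptwise : ∀ ξ ∈ V, ee (ξ + ξ₀) z = - ee ξ z := by
        intro ξ _
        rw [ee_comm, ee_add_right, ee_comm z ξ₀, he0, ee_comm z ξ]
        ring
      rw [Finset.sum_congr rfl ptwise, ← Finset.sum_neg_distrib]
    have := key.symm.trans key2
    linarith

lemma card_VH (h0 : (0 : Fin n → ZMod 2) ∈ V)
    (hadd : ∀ ξ ∈ V, ∀ η ∈ V, ξ + η ∈ V) :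
    (V.card : ℝ) * ((Finset.univ.filter
      (fun z : Fin n → ZMod 2 => ∀ ξ ∈ V, ee ξ z = 1)).card : ℝ) = (2:ℝ)^n := by
  have swap : ∑ z : Fin n → ZMod 2, ∑ ξ ∈ V, ee ξ z
      = ∑ ξ ∈ V, ∑ z : Fin n → ZMod 2, ee ξ z := Finset.sum_comm
  have lhs : ∑ z : Fin n → ZMod 2, ∑ ξ ∈ V, ee ξ z
      = (V.card : ℝ) * ((Finset.univ.filter
        (fun z : Fin n → ZMod 2 => ∀ ξ ∈ V, ee ξ z = 1)).card : ℝ) := by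
    rw [Finset.sum_congr rfl fun z _ => sum_V V h0 hadd z]
    rw [Finset.sum_ite, Finset.sum_const, Finset.sum_const_zero, add_zero, nsmul_eq_mul,
      mul_comm]
  have rhs : ∑ ξ ∈ V, ∑ z : Fin n → ZMod 2, ee ξ z = (2:ℝ)^n := by
    rw [Finset.sum_congr rfl fun ξ _ => sum_ee_right ξ]
    rw [Finset.sum_ite_eq' V 0 (fun _ => (2:ℝ)^n), if_pos h0]
  rw [← lhs, swap, rhs]

lemma F_formula (h0 : (0 : Fin n → ZMod 2) ∈ V)
    (hadd : ∀ ξ ∈ V, ∀ η ∈ V, ξ + η ∈ V)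
    (A : Finset (Fin n → ZMod 2)) (x : Fin n → ZMod 2) :
    (V.card : ℝ) * ((A.filter (fun b => ∀ ξ ∈ V, ee ξ (b + x) = 1)).card : ℝ)
      = ∑ ξ ∈ V, ee ξ x * SS A ξ := by
  have step1 : ((A.filter (fun b => ∀ ξ ∈ V, ee ξ (b + x) = 1)).card : ℝ)
      = ∑ b ∈ A, (if (∀ ξ ∈ V, ee ξ (b + x) = 1) then (1:ℝ) else 0) := by
    rw [Finset.card_filter]
    push_cast
    exact Finset.sum_congr rfl fun b _ => by split_ifs <;> norm_num
  rw [step1, Finset.mul_sum]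
  have step2 : ∀ b ∈ A, (V.card : ℝ) * (if (∀ ξ ∈ V, ee ξ (b + x) = 1) then (1:ℝ) else 0)
      = ∑ ξ ∈ V, ee ξ (b + x) := by
    intro b _
    rw [sum_V V h0 hadd (b + x)]
    split_ifs <;> ring
  rw [Finset.sum_congr rfl step2]
  rw [Finset.sum_comm]
  refine Finset.sum_congr rfl fun ξ _ => ?_
  rw [SS, Finset.mul_sum]
  exact Finset.sum_congr rfl fun b _ => by rw [ee_add_right]; ring

lemma sum_F (A : Finset (Fin n → ZMod 2)) (h0 : (0 : Fin n → ZMod 2) ∈ V) :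
    ∑ x : Fin n → ZMod 2, (∑ ξ ∈ V, ee ξ x * SS A ξ) = (2:ℝ)^n * A.card := by
  rw [Finset.sum_comm]
  have step : ∀ ξ ∈ V, ∑ x : Fin n → ZMod 2, ee ξ x * SS A ξ
      = (if ξ = 0 then (2:ℝ)^n * A.card else 0) := by
    intro ξ _
    rw [← Finset.sum_mul, sum_ee_right]
    split_ifs with h
    · rw [h, SS_zero]
    · ring
  rw [Finset.sum_congr rfl step, Finset.sum_ite_eq' V 0 (fun _ => (2:ℝ)^n * A.card),
    if_pos h0]

lemma sum_F_sq (A : Finset (Fin n → ZMod 2)) :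
    ∑ x : Fin n → ZMod 2, (∑ ξ ∈ V, ee ξ x * SS A ξ)^2
      = (2:ℝ)^n * ∑ ξ ∈ V, (SS A ξ)^2 := by
  have expand : ∀ x : Fin n → ZMod 2, (∑ ξ ∈ V, ee ξ x * SS A ξ)^2
      = ∑ ξ ∈ V, ∑ η ∈ V, (ee ξ x * ee η x) * (SS A ξ * SS A η) := by
    intro x
    rw [sq, Finset.sum_mul_sum]
    exact Finset.sum_congr rfl fun ξ _ => Finset.sum_congr rfl fun η _ => by ring
  rw [Finset.sum_congr rfl fun x _ => expand x]
  rw [Finset.sum_comm]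
  have step : ∀ ξ ∈ V, ∑ x : Fin n → ZMod 2, ∑ η ∈ V, (ee ξ x * ee η x) * (SS A ξ * SS A η)
      = (2:ℝ)^n * (SS A ξ)^2 := by
    intro ξ hξ
    rw [Finset.sum_comm]
    have inner : ∀ η ∈ V, ∑ x : Fin n → ZMod 2, (ee ξ x * ee η x) * (SS A ξ * SS A η)
        = (if η = ξ then (2:ℝ)^n * (SS A ξ)^2 else 0) := by
      intro η _
      rw [← Finset.sum_mul]
      rw [Finset.sum_congr rfl fun x _ => (ee_add_left ξ η x).symm]
      rw [sum_ee_right]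
      have : (ξ + η = 0) ↔ (η = ξ) := vadd_eq_zero_iff ξ η
      split_ifs with h1 h2 h2
      · rw [this.1 h1]; ring
      · exact absurd (this.1 h1) h2
      · exact absurd (this.2 h2) h1
      · ring
    rw [Finset.sum_congr rfl inner, Finset.sum_ite_eq' V ξ
      (fun _ => (2:ℝ)^n * (SS A ξ)^2), if_pos hξ]
  rw [Finset.sum_congr rfl step, ← Finset.mul_sum]

end VLemmas

lemma quarter_pow (x : ℝ) (hx : 0 ≤ x) : (x ^ ((1:ℝ)/4))^(4:ℕ) = x := by
  rw [← Real.rpow_natCast (x ^ ((1:ℝ)/4)) 4, ← Real.rpow_mul hx]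
  norm_num

end Stmt16Aux


set_option maxHeartbeats 4000000 in
open Stmt16Aux in
theorem stmt_16 {n : ℕ} {K : ℝ} (hK : 1 ≤ K) (A : Fin 4 → Finset (Fin n → ZMod 2))
    (hA : ∀ i, (A i).Nonempty)
    (hflat : ∀ ξ : Fin n → ZMod 2,
      (∀ i, ξ ∈ Spec (9 / 10) (A i)) ∨
        (∀ i, ξ ∉ Spec (1 / Real.sqrt (2 * K)) (A i)))
    (hω : 1 / K ≤ omegaE (A 0) (A 1) (A 2) (A 3)) :
    ∃ (H : Submodule (ZMod 2) (Fin n → ZMod 2)) (x : Fin 4 → (Fin n → ZMod 2)),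
      (4 / 5 : ℝ) * ∏ i, ((A i).card : ℝ) ^ ((1 : ℝ) / 4) ≤ Nat.card H ∧
      (Nat.card H : ℝ) / (2 * K) ≤
        ∏ i, (((A i).filter fun a => a + x i ∈ H).card : ℝ) ^ ((1 : ℝ) / 4) := by
  classical
  have hN : (0:ℝ) < (2:ℝ)^n := by positivity
  have hK0 : (0:ℝ) < K := lt_of_lt_of_le one_pos hK
  have h2K : (0:ℝ) < 2*K := by linarith
  have ha : ∀ i, (0:ℝ) < ((A i).card : ℝ) := fun i => by exact_mod_cast (hA i).card_pos
  set N : ℝ := (2:ℝ)^n with hN_def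
  -- Spec in terms of SS
  have hSpec : ∀ (α : ℝ) (B : Finset (Fin n → ZMod 2)) ξ,
      ξ ∈ Spec α B ↔ α * B.card ≤ |SS B ξ| := by
    intro α B ξ
    have hft : ftA B ξ = N⁻¹ * SS B ξ := rfl
    rw [Spec, Set.mem_setOf_eq, hft]
    have habs : |N⁻¹ * SS B ξ| = |SS B ξ| / N := by
      rw [abs_mul, abs_inv, abs_of_pos hN, inv_mul_eq_div]
    rw [habs, div_le_div_iff₀ hN hN]
    exact ⟨fun h => le_of_mul_le_mul_right h hN, fun h => mul_le_mul_of_nonneg_right h hN.le⟩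
  -- the common large spectrum
  set V : Finset (Fin n → ZMod 2) :=
    Finset.univ.filter (fun ξ => ∀ i, (9/10:ℝ) * ((A i).card : ℝ) ≤ |SS (A i) ξ|) with hV_def
  have hVmem : ∀ ξ, ξ ∈ V ↔ ∀ i, (9/10:ℝ) * ((A i).card : ℝ) ≤ |SS (A i) ξ| := by
    intro ξ; rw [hV_def]; simp
  have hsqrt : (5/4 : ℝ) ≤ Real.sqrt (2*K) := by
    rw [Real.le_sqrt (by norm_num) (by linarith)]
    nlinarith
  have hsqrtpos : (0:ℝ) < Real.sqrt (2*K) := lt_of_lt_of_le (by norm_num) hsqrt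
  have hflat' : ∀ ξ, ξ ∉ V → ∀ i, |SS (A i) ξ| ≤ ((A i).card : ℝ) / Real.sqrt (2*K) := by
    intro ξ hξ i
    rcases hflat ξ with hc | hc
    · exact absurd ((hVmem ξ).2 (fun j => (hSpec _ _ _).1 (hc j))) hξ
    · have h1 := hc i
      rw [hSpec] at h1
      push_neg at h1
      have := le_of_lt h1
      calc |SS (A i) ξ| ≤ 1 / Real.sqrt (2*K) * ((A i).card : ℝ) := this
      _ = ((A i).card : ℝ) / Real.sqrt (2*K) := by ring
  have hV0 : (0 : Fin n → ZMod 2) ∈ V := by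
    rw [hVmem]
    intro i
    rw [SS_zero, abs_of_pos (ha i)]
    nlinarith [ha i]
  have hVadd : ∀ ξ ∈ V, ∀ η ∈ V, ξ + η ∈ V := by
    intro ξ hξ η hη
    have h8 : (8/10:ℝ) * ((A 0).card : ℝ) ≤ |SS (A 0) (ξ+η)| :=
      key08 (A 0) ξ η ((hVmem ξ).1 hξ 0) ((hVmem η).1 hη 0)
    rcases hflat (ξ+η) with hc | hc
    · exact (hVmem _).2 (fun j => (hSpec _ _ _).1 (hc j))
    · exfalso
      apply hc 0
      rw [hSpec]
      have h1 : 1/Real.sqrt (2*K) * ((A 0).card : ℝ) ≤ 8/10 * ((A 0).card : ℝ) := by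
        have h2 : 1/Real.sqrt (2*K) ≤ 8/10 := by
          rw [div_le_iff₀ hsqrtpos]; nlinarith
        nlinarith [ha 0]
      exact le_trans h1 h8
  clear_value V
  set v : ℝ := (V.card : ℝ) with hv_def
  have hv : (0:ℝ) < v := by
    rw [hv_def]
    exact_mod_cast Finset.card_pos.2 ⟨0, hV0⟩
  clear_value v
  -- energies on V
  set D : Fin 4 → ℝ := fun i => ∑ ξ ∈ V, (SS (A i) ξ)^2 with hD_def
  have hD0 : ∀ i, 0 ≤ D i := fun i =>
    Finset.sum_nonneg (fun ξ _ => sq_nonneg _)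
  have hDk : ∀ k, D k = ∑ ξ ∈ V, (SS (A k) ξ)^2 := fun k => by rw [hD_def]
  have hDle : ∀ i, D i ≤ N * ((A i).card : ℝ) := by
    intro i
    rw [hDk i]
    calc ∑ ξ ∈ V, (SS (A i) ξ)^2 ≤ ∑ ξ : Fin n → ZMod 2, (SS (A i) ξ)^2 :=
          Finset.sum_le_sum_of_subset_of_nonneg (Finset.subset_univ V)
            (fun ξ _ _ => sq_nonneg _)
    _ = N * ((A i).card : ℝ) := sum_SS_sq (A i)
  have hDge : ∀ i, v * ((81/100) * ((A i).card : ℝ)^2) ≤ D i := by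
    intro i
    have hpt : ∀ ξ ∈ V, (81/100) * ((A i).card : ℝ)^2 ≤ (SS (A i) ξ)^2 := by
      intro ξ hξ
      have h9 := (hVmem ξ).1 hξ i
      nlinarith [sq_abs (SS (A i) ξ), abs_nonneg (SS (A i) ξ), ha i]
    calc v * ((81/100) * ((A i).card : ℝ)^2)
        = ∑ _ξ ∈ V, (81/100) * ((A i).card : ℝ)^2 := by
          rw [Finset.sum_const, nsmul_eq_mul, hv_def]
    _ ≤ D i := by rw [hDk i]; exact Finset.sum_le_sum hpt
  clear_value D
  -- the subspace
  set Hs : Submodule (ZMod 2) (Fin n → ZMod 2) :=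
    { carrier := {z | ∀ ξ ∈ V, ee ξ z = 1}
      add_mem' := by
        intro y z hy hz ξ hξ
        rw [ee_add_right, hy ξ hξ, hz ξ hξ, mul_one]
      zero_mem' := by
        intro ξ _
        exact ee_zero_right ξ
      smul_mem' := by
        intro c z hz
        rcases zmod2_cases c with h | h
        · rw [h, zero_smul]
          intro ξ _
          exact ee_zero_right ξ
        · rw [h, one_smul]
          exact hz } with hHs_def
  have hHmem : ∀ z, z ∈ Hs ↔ ∀ ξ ∈ V, ee ξ z = 1 := fun z => Iff.rfl
  have hcardH : (Nat.card Hs : ℝ)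
      = ((Finset.univ.filter (fun z : Fin n → ZMod 2 => ∀ ξ ∈ V, ee ξ z = 1)).card : ℝ) := by
    rw [Nat.card_eq_fintype_card, Fintype.card_subtype]
    norm_num
    congr 1
    apply Finset.filter_congr
    intro z _
    simp [hHmem]
  clear_value Hs
  set hcard : ℝ := (Nat.card Hs : ℝ) with hh_def
  have hvh : v * hcard = N := by
    rw [hcardH, hv_def]
    exact card_VH V hV0 hVadd
  have hh0 : (0:ℝ) < hcard := by
    have : hcard = N / v := by rw [eq_div_iff hv.ne', mul_comm]; exact hvh
    rw [this]; positivity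
  -- counting identity
  set T : ℝ := (((((A 0) ×ˢ (A 1)) ×ˢ ((A 2) ×ˢ (A 3))).filter
      (fun p => p.1.1 + p.1.2 + p.2.1 + p.2.2 = 0)).card : ℝ) with hT_def
  set P : ℝ := ((A 0).card : ℝ) * ((A 1).card : ℝ) * ((A 2).card : ℝ) * ((A 3).card : ℝ)
    with hP_def
  have hP : 0 < P := mul_pos (mul_pos (mul_pos (ha 0) (ha 1)) (ha 2)) (ha 3)
  set Q : ℝ := P ^ ((3:ℝ)/4) with hQ_def
  have hQ : 0 < Q := Real.rpow_pos_of_pos hP _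
  have hQ4 : Q^(4:ℕ) = P^(3:ℕ) := by
    rw [hQ_def, ← Real.rpow_natCast (P ^ ((3:ℝ)/4)) 4, ← Real.rpow_mul hP.le,
      ← Real.rpow_natCast P 3]
    norm_num
  clear_value Q
  have hT : Q / K ≤ T := by
    have h1 : 1/K ≤ T/Q := by
      unfold omegaE at hω
      rw [← hP_def, ← hQ_def, ← hT_def] at hω
      exact hω
    calc Q/K = (1/K)*Q := by ring
    _ ≤ (T/Q)*Q := mul_le_mul_of_nonneg_right h1 hQ.le
    _ = T := div_mul_cancel₀ T hQ.ne'
  have hTsum : N * T = ∑ ξ : Fin n → ZMod 2,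
      SS (A 0) ξ * SS (A 1) ξ * SS (A 2) ξ * SS (A 3) ξ := by
    have expand : ∀ ξ : Fin n → ZMod 2,
        SS (A 0) ξ * SS (A 1) ξ * SS (A 2) ξ * SS (A 3) ξ
        = ∑ p ∈ ((A 0) ×ˢ (A 1)) ×ˢ ((A 2) ×ˢ (A 3)),
            ee ξ (p.1.1 + p.1.2 + p.2.1 + p.2.2) := by
      intro ξ
      have h01 : SS (A 0) ξ * SS (A 1) ξ
          = ∑ p ∈ (A 0) ×ˢ (A 1), ee ξ (p.1 + p.2) := by
        rw [SS, SS, Finset.sum_mul_sum, Finset.sum_product]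
        exact Finset.sum_congr rfl fun a _ => Finset.sum_congr rfl fun b _ =>
          (ee_add_right ξ a b).symm
      have h23 : SS (A 2) ξ * SS (A 3) ξ
          = ∑ p ∈ (A 2) ×ˢ (A 3), ee ξ (p.1 + p.2) := by
        rw [SS, SS, Finset.sum_mul_sum, Finset.sum_product]
        exact Finset.sum_congr rfl fun a _ => Finset.sum_congr rfl fun b _ =>
          (ee_add_right ξ a b).symm
      rw [show SS (A 0) ξ * SS (A 1) ξ * SS (A 2) ξ * SS (A 3) ξ
          = (SS (A 0) ξ * SS (A 1) ξ) * (SS (A 2) ξ * SS (A 3) ξ) by ring, h01, h23,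
        Finset.sum_mul_sum]
      conv_rhs => rw [Finset.sum_product]
      apply Finset.sum_congr rfl
      intro p _
      apply Finset.sum_congr rfl
      intro q _
      rw [← ee_add_right]
      congr 1
      abel
    rw [Finset.sum_congr rfl fun ξ _ => expand ξ, Finset.sum_comm]
    rw [Finset.sum_congr rfl fun p _ => sum_ee_left (p.1.1 + p.1.2 + p.2.1 + p.2.2)]
    rw [← Finset.sum_filter]
    rw [Finset.sum_const, nsmul_eq_mul]
    rw [hT_def, hN_def]
    ring
  clear_value T
  -- main term vs tail
  set M : ℝ := ∑ ξ ∈ V, |SS (A 0) ξ| * |SS (A 1) ξ| * |SS (A 2) ξ| * |SS (A 3) ξ| with hM_def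
  clear_value M
  have habs4 : ∀ ξ : Fin n → ZMod 2,
      |SS (A 0) ξ * SS (A 1) ξ * SS (A 2) ξ * SS (A 3) ξ|
      = |SS (A 0) ξ| * |SS (A 1) ξ| * |SS (A 2) ξ| * |SS (A 3) ξ| := by
    intro ξ
    rw [abs_mul, abs_mul, abs_mul]
  have hMmain : N * Q / (2*K) ≤ M := by
    set W : Finset (Fin n → ZMod 2) := Finset.univ \ V with hW_def
    have hWmem : ∀ ξ ∈ W, ξ ∉ V := fun ξ hξ => (Finset.mem_sdiff.1 hξ).2
    have hsplit : (∑ ξ ∈ W, SS (A 0) ξ * SS (A 1) ξ * SS (A 2) ξ * SS (A 3) ξ)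
        + (∑ ξ ∈ V, SS (A 0) ξ * SS (A 1) ξ * SS (A 2) ξ * SS (A 3) ξ)
        = ∑ ξ : Fin n → ZMod 2, SS (A 0) ξ * SS (A 1) ξ * SS (A 2) ξ * SS (A 3) ξ :=
      Finset.sum_sdiff (Finset.subset_univ V)
    clear_value W
    set tl : ℝ := ∑ ξ ∈ W, |SS (A 0) ξ| * |SS (A 1) ξ| * |SS (A 2) ξ| * |SS (A 3) ξ|
      with htl_def
    have htl0 : 0 ≤ tl := by
      rw [htl_def]
      exact Finset.sum_nonneg fun ξ _ => by positivity
    clear_value tl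
    have hsq : ∀ (i : Fin 4) (U : Finset (Fin n → ZMod 2)),
        ∑ ξ ∈ U, (SS (A i) ξ)^2 ≤ N * ((A i).card:ℝ) := by
      intro i U
      calc ∑ ξ ∈ U, (SS (A i) ξ)^2
          ≤ ∑ ξ : Fin n → ZMod 2, (SS (A i) ξ)^2 :=
            Finset.sum_le_sum_of_subset_of_nonneg (Finset.subset_univ U)
              (fun ξ _ _ => sq_nonneg _)
        _ = N * ((A i).card:ℝ) := sum_SS_sq (A i)
    have hZ : ∀ i j : Fin 4, (∑ ξ ∈ W, |SS (A i) ξ| * |SS (A j) ξ|)^2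
        ≤ (N * ((A i).card:ℝ)) * (N * ((A j).card:ℝ)) := by
      intro i j
      have cs := Finset.sum_mul_sq_le_sq_mul_sq W
        (fun ξ => |SS (A i) ξ|) (fun ξ => |SS (A j) ξ|)
      have e1 : ∑ ξ ∈ W, |SS (A i) ξ|^2 = ∑ ξ ∈ W, (SS (A i) ξ)^2 :=
        Finset.sum_congr rfl fun ξ _ => sq_abs _
      have e2 : ∑ ξ ∈ W, |SS (A j) ξ|^2 = ∑ ξ ∈ W, (SS (A j) ξ)^2 :=
        Finset.sum_congr rfl fun ξ _ => sq_abs _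
      rw [e1, e2] at cs
      calc (∑ ξ ∈ W, |SS (A i) ξ| * |SS (A j) ξ|)^2
          ≤ (∑ ξ ∈ W, (SS (A i) ξ)^2) * (∑ ξ ∈ W, (SS (A j) ξ)^2) := cs
        _ ≤ (N * ((A i).card:ℝ)) * (N * ((A j).card:ℝ)) := by
            apply mul_le_mul (hsq i W) (hsq j W)
              (Finset.sum_nonneg fun ξ _ => sq_nonneg _) (by positivity)
    have hXle : ∀ i j : Fin 4, ∑ ξ ∈ W, (SS (A i) ξ)^2 * (SS (A j) ξ)^2
        ≤ (((A i).card:ℝ) * ((A j).card:ℝ) / (2*K))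
          * ∑ ξ ∈ W, |SS (A i) ξ| * |SS (A j) ξ| := by
      intro i j
      rw [Finset.mul_sum]
      apply Finset.sum_le_sum
      intro ξ hξ
      have h1 := hflat' ξ (hWmem ξ hξ) i
      have h2 := hflat' ξ (hWmem ξ hξ) j
      have hs2K : Real.sqrt (2*K) * Real.sqrt (2*K) = 2*K := Real.mul_self_sqrt h2K.le
      have h3 : |SS (A i) ξ| * |SS (A j) ξ| ≤ ((A i).card:ℝ) * ((A j).card:ℝ) / (2*K) := by
        calc |SS (A i) ξ| * |SS (A j) ξ|
            ≤ (((A i).card:ℝ)/Real.sqrt (2*K)) * (((A j).card:ℝ)/Real.sqrt (2*K)) :=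
              mul_le_mul h1 h2 (abs_nonneg _) (by positivity)
          _ = ((A i).card:ℝ) * ((A j).card:ℝ) / (2*K) := by
              rw [div_mul_div_comm, hs2K]
      have e1 : (SS (A i) ξ)^2 * (SS (A j) ξ)^2
          = (|SS (A i) ξ| * |SS (A j) ξ|) * (|SS (A i) ξ| * |SS (A j) ξ|) := by
        rw [← sq_abs (SS (A i) ξ), ← sq_abs (SS (A j) ξ)]
        ring
      rw [e1]
      exact mul_le_mul_of_nonneg_right h3 (by positivity)
    have htail : tl ≤ N * Q / (2*K) := by
      have h2 : tl^2 ≤ (∑ ξ ∈ W, (SS (A 0) ξ)^2 * (SS (A 1) ξ)^2)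
          * (∑ ξ ∈ W, (SS (A 2) ξ)^2 * (SS (A 3) ξ)^2) := by
        have cs := Finset.sum_mul_sq_le_sq_mul_sq W
          (fun ξ => |SS (A 0) ξ| * |SS (A 1) ξ|) (fun ξ => |SS (A 2) ξ| * |SS (A 3) ξ|)
        have e : ∑ ξ ∈ W, (|SS (A 0) ξ| * |SS (A 1) ξ|) * (|SS (A 2) ξ| * |SS (A 3) ξ|)
            = tl := by
          rw [htl_def]
          exact Finset.sum_congr rfl fun ξ _ => by ring
        have e1 : ∑ ξ ∈ W, (|SS (A 0) ξ| * |SS (A 1) ξ|)^2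
            = ∑ ξ ∈ W, (SS (A 0) ξ)^2 * (SS (A 1) ξ)^2 :=
          Finset.sum_congr rfl fun ξ _ => by rw [mul_pow, sq_abs, sq_abs]
        have e2 : ∑ ξ ∈ W, (|SS (A 2) ξ| * |SS (A 3) ξ|)^2
            = ∑ ξ ∈ W, (SS (A 2) ξ)^2 * (SS (A 3) ξ)^2 :=
          Finset.sum_congr rfl fun ξ _ => by rw [mul_pow, sq_abs, sq_abs]
        rw [e, e1, e2] at cs
        exact cs
      set Z01 : ℝ := ∑ ξ ∈ W, |SS (A 0) ξ| * |SS (A 1) ξ| with hZ01_def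
      set Z23 : ℝ := ∑ ξ ∈ W, |SS (A 2) ξ| * |SS (A 3) ξ| with hZ23_def
      have hZ01n : 0 ≤ Z01 := Finset.sum_nonneg fun ξ _ => by positivity
      have hZ23n : 0 ≤ Z23 := Finset.sum_nonneg fun ξ _ => by positivity
      have hX0 : 0 ≤ ∑ ξ ∈ W, (SS (A 0) ξ)^2 * (SS (A 1) ξ)^2 :=
        Finset.sum_nonneg fun ξ _ => by positivity
      have hY0 : 0 ≤ ∑ ξ ∈ W, (SS (A 2) ξ)^2 * (SS (A 3) ξ)^2 :=
        Finset.sum_nonneg fun ξ _ => by positivity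
      have hXY : (∑ ξ ∈ W, (SS (A 0) ξ)^2 * (SS (A 1) ξ)^2)
          * (∑ ξ ∈ W, (SS (A 2) ξ)^2 * (SS (A 3) ξ)^2)
          ≤ ((((A 0).card:ℝ) * ((A 1).card:ℝ) / (2*K)) * Z01)
            * ((((A 2).card:ℝ) * ((A 3).card:ℝ) / (2*K)) * Z23) :=
        mul_le_mul (hXle 0 1) (hXle 2 3) hY0 (by positivity)
      have t2 : tl^2 ≤ ((((A 0).card:ℝ) * ((A 1).card:ℝ) / (2*K)) * Z01)
          * ((((A 2).card:ℝ) * ((A 3).card:ℝ) / (2*K)) * Z23) := le_trans h2 hXY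
      have t4 : (tl^2)^2 ≤ (((((A 0).card:ℝ) * ((A 1).card:ℝ) / (2*K)) * Z01)
          * ((((A 2).card:ℝ) * ((A 3).card:ℝ) / (2*K)) * Z23))^2 :=
        pow_le_pow_left₀ (sq_nonneg tl) t2 2
      have hZZ : (Z01^2) * (Z23^2)
          ≤ ((N * ((A 0).card:ℝ)) * (N * ((A 1).card:ℝ)))
            * ((N * ((A 2).card:ℝ)) * (N * ((A 3).card:ℝ))) :=
        mul_le_mul (hZ 0 1) (hZ 2 3) (sq_nonneg _) (by positivity)
      have final : tl^(4:ℕ) ≤ (N*Q/(2*K))^(4:ℕ) := by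
        have expand2 : (((((A 0).card:ℝ) * ((A 1).card:ℝ) / (2*K)) * Z01)
            * ((((A 2).card:ℝ) * ((A 3).card:ℝ) / (2*K)) * Z23))^2
            = ((((A 0).card:ℝ) * ((A 1).card:ℝ) * (((A 2).card:ℝ) * ((A 3).card:ℝ)))^2
              / (2*K)^4) * ((Z01^2) * (Z23^2)) := by
          field_simp
        have s1 : (tl^2)^2 ≤ ((((A 0).card:ℝ) * ((A 1).card:ℝ)
            * (((A 2).card:ℝ) * ((A 3).card:ℝ)))^2 / (2*K)^4) * ((Z01^2) * (Z23^2)) := by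
          rw [← expand2]
          exact t4
        have s2 : ((((A 0).card:ℝ) * ((A 1).card:ℝ)
            * (((A 2).card:ℝ) * ((A 3).card:ℝ)))^2 / (2*K)^4) * ((Z01^2) * (Z23^2))
            ≤ ((((A 0).card:ℝ) * ((A 1).card:ℝ)
            * (((A 2).card:ℝ) * ((A 3).card:ℝ)))^2 / (2*K)^4)
              * (((N * ((A 0).card:ℝ)) * (N * ((A 1).card:ℝ)))
                * ((N * ((A 2).card:ℝ)) * (N * ((A 3).card:ℝ)))) :=
          mul_le_mul_of_nonneg_left hZZ (by positivity)
        have s3 : ((((A 0).card:ℝ) * ((A 1).card:ℝ)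
            * (((A 2).card:ℝ) * ((A 3).card:ℝ)))^2 / (2*K)^4)
              * (((N * ((A 0).card:ℝ)) * (N * ((A 1).card:ℝ)))
                * ((N * ((A 2).card:ℝ)) * (N * ((A 3).card:ℝ))))
            = N^(4:ℕ) * P^(3:ℕ) / (2*K)^(4:ℕ) := by
          rw [hP_def]
          field_simp
        calc tl^(4:ℕ) = (tl^2)^2 := by ring
        _ ≤ _ := s1
        _ ≤ _ := s2
        _ = N^(4:ℕ) * P^(3:ℕ) / (2*K)^(4:ℕ) := s3
        _ = (N*Q/(2*K))^(4:ℕ) := by rw [← hQ4]; ring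
      exact (pow_le_pow_iff_left₀ htl0 (div_nonneg (mul_nonneg hN.le hQ.le) h2K.le)
        (by norm_num)).1 final
    have hWabs : ∑ ξ ∈ W, SS (A 0) ξ * SS (A 1) ξ * SS (A 2) ξ * SS (A 3) ξ ≤ tl := by
      rw [htl_def]
      apply Finset.sum_le_sum
      intro ξ _
      rw [← habs4 ξ]
      exact le_abs_self _
    have hMge : ∑ ξ ∈ V, SS (A 0) ξ * SS (A 1) ξ * SS (A 2) ξ * SS (A 3) ξ ≤ M := by
      rw [hM_def]
      apply Finset.sum_le_sum
      intro ξ _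
      rw [← habs4 ξ]
      exact le_abs_self _
    have hNT : N * Q / K ≤ N * T := by
      calc N * Q / K = N * (Q/K) := by ring
      _ ≤ N * T := mul_le_mul_of_nonneg_left hT hN.le
    have hhalf : N * Q / K - N * Q / (2*K) = N * Q / (2*K) := by
      field_simp
      ring
    linarith [hsplit, hWabs, hMge, hNT, htail, hTsum.symm]
  have hM4 : M^(4:ℕ) ≤ (((A 0).card:ℝ)^2 * D 0) * (((A 1).card:ℝ)^2 * D 1)
      * (((A 2).card:ℝ)^2 * D 2) * (((A 3).card:ℝ)^2 * D 3) := by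
    have h2 : M^2 ≤ (∑ ξ ∈ V, (SS (A 0) ξ)^2 * (SS (A 1) ξ)^2)
        * (∑ ξ ∈ V, (SS (A 2) ξ)^2 * (SS (A 3) ξ)^2) := by
      have cs := Finset.sum_mul_sq_le_sq_mul_sq V
        (fun ξ => |SS (A 0) ξ| * |SS (A 1) ξ|) (fun ξ => |SS (A 2) ξ| * |SS (A 3) ξ|)
      have e : ∑ ξ ∈ V, (|SS (A 0) ξ| * |SS (A 1) ξ|) * (|SS (A 2) ξ| * |SS (A 3) ξ|)
          = M := by
        rw [hM_def]
        exact Finset.sum_congr rfl fun ξ _ => by ring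
      have e1 : ∑ ξ ∈ V, (|SS (A 0) ξ| * |SS (A 1) ξ|)^2
          = ∑ ξ ∈ V, (SS (A 0) ξ)^2 * (SS (A 1) ξ)^2 :=
        Finset.sum_congr rfl fun ξ _ => by rw [mul_pow, sq_abs, sq_abs]
      have e2 : ∑ ξ ∈ V, (|SS (A 2) ξ| * |SS (A 3) ξ|)^2
          = ∑ ξ ∈ V, (SS (A 2) ξ)^2 * (SS (A 3) ξ)^2 :=
        Finset.sum_congr rfl fun ξ _ => by rw [mul_pow, sq_abs, sq_abs]
      rw [e, e1, e2] at cs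
      exact cs
    have hquad : ∀ i j : Fin 4, (∑ ξ ∈ V, (SS (A i) ξ)^2 * (SS (A j) ξ)^2)^2
        ≤ (((A i).card:ℝ)^2 * D i) * (((A j).card:ℝ)^2 * D j) := by
      intro i j
      have cs := Finset.sum_mul_sq_le_sq_mul_sq V
        (fun ξ => (SS (A i) ξ)^2) (fun ξ => (SS (A j) ξ)^2)
      have hS4 : ∀ k : Fin 4, ∑ ξ ∈ V, ((SS (A k) ξ)^2)^2
          ≤ ((A k).card:ℝ)^2 * D k := by
        intro k
        rw [hDk k, Finset.mul_sum]
        apply Finset.sum_le_sum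
        intro ξ _
        have hle := abs_SS_le (A k) ξ
        have h2 : (SS (A k) ξ)^2 ≤ ((A k).card:ℝ)^2 := by
          nlinarith [abs_nonneg (SS (A k) ξ), sq_abs (SS (A k) ξ)]
        calc ((SS (A k) ξ)^2)^2 = (SS (A k) ξ)^2 * (SS (A k) ξ)^2 := by ring
        _ ≤ ((A k).card:ℝ)^2 * (SS (A k) ξ)^2 :=
            mul_le_mul_of_nonneg_right h2 (sq_nonneg _)
      calc (∑ ξ ∈ V, (SS (A i) ξ)^2 * (SS (A j) ξ)^2)^2
          ≤ (∑ ξ ∈ V, ((SS (A i) ξ)^2)^2) * (∑ ξ ∈ V, ((SS (A j) ξ)^2)^2) := cs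
        _ ≤ (((A i).card:ℝ)^2 * D i) * (((A j).card:ℝ)^2 * D j) :=
            mul_le_mul (hS4 i) (hS4 j)
              (Finset.sum_nonneg fun ξ _ => by positivity)
              (mul_nonneg (sq_nonneg _) (hD0 i))
    have hM0 : 0 ≤ M := by
      rw [hM_def]
      exact Finset.sum_nonneg fun ξ _ => by positivity
    have h4 : M^(4:ℕ) = (M^2)^2 := by ring
    rw [h4]
    calc (M^2)^2 ≤ ((∑ ξ ∈ V, (SS (A 0) ξ)^2 * (SS (A 1) ξ)^2)
        * (∑ ξ ∈ V, (SS (A 2) ξ)^2 * (SS (A 3) ξ)^2))^2 :=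
          pow_le_pow_left₀ (sq_nonneg M) h2 2
    _ = (∑ ξ ∈ V, (SS (A 0) ξ)^2 * (SS (A 1) ξ)^2)^2
        * (∑ ξ ∈ V, (SS (A 2) ξ)^2 * (SS (A 3) ξ)^2)^2 := by ring
    _ ≤ ((((A 0).card:ℝ)^2 * D 0) * (((A 1).card:ℝ)^2 * D 1))
        * ((((A 2).card:ℝ)^2 * D 2) * (((A 3).card:ℝ)^2 * D 3)) :=
          mul_le_mul (hquad 0 1) (hquad 2 3) (sq_nonneg _)
            (mul_nonneg (mul_nonneg (sq_nonneg _) (hD0 0))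
              (mul_nonneg (sq_nonneg _) (hD0 1)))
    _ = (((A 0).card:ℝ)^2 * D 0) * (((A 1).card:ℝ)^2 * D 1)
        * (((A 2).card:ℝ)^2 * D 2) * (((A 3).card:ℝ)^2 * D 3) := by ring
  have hprodD : N^(4:ℕ) * P / (2*K)^(4:ℕ) ≤ D 0 * D 1 * D 2 * D 3 := by
    have hM0 : 0 ≤ M := by
      rw [hM_def]
      exact Finset.sum_nonneg fun ξ _ => by positivity
    have h1 : (N * Q / (2*K))^(4:ℕ) ≤ M^(4:ℕ) := by
      apply pow_le_pow_left₀ (by positivity) hMmain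
    rw [div_pow, mul_pow, hQ4] at h1
    have h2 := le_trans h1 hM4
    -- N^4 P^3/(2K)^4 ≤ P^2 * ∏ D
    have h3 : (((A 0).card:ℝ)^2 * D 0) * (((A 1).card:ℝ)^2 * D 1)
        * (((A 2).card:ℝ)^2 * D 2) * (((A 3).card:ℝ)^2 * D 3)
        = P^2 * (D 0 * D 1 * D 2 * D 3) := by rw [hP_def]; ring
    rw [h3] at h2
    rw [div_le_iff₀ (by positivity)] at h2 ⊢
    nlinarith [hD0 0, hD0 1, hD0 2, hD0 3, pow_pos hP 2, sq_nonneg P, hP]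
  -- F bounds
  have hFi : ∀ i, ∃ x : Fin n → ZMod 2,
      D i / (v * ((A i).card : ℝ)) ≤ (((A i).filter (fun b => b + x ∈ Hs)).card : ℝ) := by
    intro i
    have hform : ∀ x : Fin n → ZMod 2,
        v * (((A i).filter (fun b => b + x ∈ Hs)).card : ℝ)
        = ∑ ξ ∈ V, ee ξ x * SS (A i) ξ := by
      intro x
      have efil : (A i).filter (fun b => b + x ∈ Hs)
          = (A i).filter (fun b => ∀ ξ ∈ V, ee ξ (b + x) = 1) :=
        Finset.filter_congr (fun b _ => by rw [hHmem])
      rw [efil, hv_def]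
      exact F_formula V hV0 hVadd (A i) x
    obtain ⟨x₀, _, hmax⟩ := Finset.exists_max_image Finset.univ
      (fun x : Fin n → ZMod 2 => (((A i).filter (fun b => b + x ∈ Hs)).card : ℝ))
      ⟨0, Finset.mem_univ 0⟩
    refine ⟨x₀, ?_⟩
    have hF0 : ∀ x : Fin n → ZMod 2,
        (0:ℝ) ≤ (((A i).filter (fun b => b + x ∈ Hs)).card : ℝ) :=
      fun x => Nat.cast_nonneg _
    have hsum1 : ∑ x : Fin n → ZMod 2,
        v * (((A i).filter (fun b => b + x ∈ Hs)).card : ℝ) = N * ((A i).card:ℝ) := by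
      rw [Finset.sum_congr rfl fun x _ => hform x]
      exact sum_F V (A i) hV0
    have hsum2 : ∑ x : Fin n → ZMod 2,
        (v * (((A i).filter (fun b => b + x ∈ Hs)).card : ℝ))^2 = N * D i := by
      rw [Finset.sum_congr rfl fun x _ => by rw [hform x]]
      rw [hDk i]
      exact sum_F_sq V (A i)
    have hle : ∑ x : Fin n → ZMod 2,
        (v * (((A i).filter (fun b => b + x ∈ Hs)).card : ℝ))^2
        ≤ (v * (((A i).filter (fun b => b + x₀ ∈ Hs)).card : ℝ))
          * ∑ x : Fin n → ZMod 2,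
            v * (((A i).filter (fun b => b + x ∈ Hs)).card : ℝ) := by
      rw [Finset.mul_sum]
      apply Finset.sum_le_sum
      intro y _
      have h1 : (((A i).filter (fun b => b + y ∈ Hs)).card : ℝ)
          ≤ (((A i).filter (fun b => b + x₀ ∈ Hs)).card : ℝ) := hmax y (Finset.mem_univ y)
      have h2 : (0:ℝ) ≤ v * (((A i).filter (fun b => b + y ∈ Hs)).card : ℝ) :=
        mul_nonneg hv.le (hF0 y)
      calc (v * (((A i).filter (fun b => b + y ∈ Hs)).card : ℝ))^2
          = (v * (((A i).filter (fun b => b + y ∈ Hs)).card : ℝ))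
            * (v * (((A i).filter (fun b => b + y ∈ Hs)).card : ℝ)) := sq _
      _ ≤ (v * (((A i).filter (fun b => b + x₀ ∈ Hs)).card : ℝ))
            * (v * (((A i).filter (fun b => b + y ∈ Hs)).card : ℝ)) :=
          mul_le_mul_of_nonneg_right (mul_le_mul_of_nonneg_left h1 hv.le) h2
    rw [hsum1, hsum2] at hle
    rw [div_le_iff₀ (mul_pos hv (ha i))]
    nlinarith [hle, hN, hF0 x₀, mul_pos hv (ha i)]
  choose xx hxx using hFi
  refine ⟨Hs, xx, ?_, ?_⟩
  · -- goal 1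
    have hprod0 : (0:ℝ) ≤ ∏ i, ((A i).card : ℝ) ^ ((1:ℝ)/4) :=
      Finset.prod_nonneg fun i _ => Real.rpow_nonneg (Nat.cast_nonneg _) _
    have e1 : (∏ i, ((A i).card : ℝ) ^ ((1:ℝ)/4))^(4:ℕ) = P := by
      rw [← Finset.prod_pow, Fin.prod_univ_four,
        quarter_pow _ (Nat.cast_nonneg _), quarter_pow _ (Nat.cast_nonneg _),
        quarter_pow _ (Nat.cast_nonneg _), quarter_pow _ (Nat.cast_nonneg _), hP_def]
    have hvai : ∀ i, v * ((A i).card:ℝ) ≤ (100/81) * N := by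
      intro i
      have h1 := hDge i
      have h2 := hDle i
      nlinarith [ha i, hv]
    have hva0 : ∀ i, (0:ℝ) ≤ v * ((A i).card:ℝ) := fun i => (mul_pos hv (ha i)).le
    have hv4 : v^(4:ℕ) * P ≤ ((100/81) * N)^(4:ℕ) := by
      have e2 : v^(4:ℕ) * P = (v * ((A 0).card:ℝ)) * (v * ((A 1).card:ℝ))
          * (v * ((A 2).card:ℝ)) * (v * ((A 3).card:ℝ)) := by
        rw [hP_def]; ring
      have e3 : ((100/81) * N : ℝ)^(4:ℕ) = ((100/81)*N) * ((100/81)*N)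
          * ((100/81)*N) * ((100/81)*N) := by ring
      rw [e2, e3]
      have hcN : (0:ℝ) ≤ (100/81) * N := by positivity
      exact mul_le_mul (mul_le_mul (mul_le_mul (hvai 0) (hvai 1) (hva0 1)
        hcN) (hvai 2) (hva0 2) (by positivity)) (hvai 3) (hva0 3) (by positivity)
    have hvh4 : v^(4:ℕ) * hcard^(4:ℕ) = N^(4:ℕ) := by rw [← mul_pow, hvh]
    have h5 : ((4/5:ℝ)^(4:ℕ) * P) * v^(4:ℕ) ≤ hcard^(4:ℕ) * v^(4:ℕ) := by
      have : (4/5:ℝ)^(4:ℕ) * (v^(4:ℕ) * P) ≤ (4/5:ℝ)^(4:ℕ) * ((100/81) * N)^(4:ℕ) :=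
        mul_le_mul_of_nonneg_left hv4 (by norm_num)
      have hcomp : (4/5:ℝ)^(4:ℕ) * ((100/81) * N)^(4:ℕ) ≤ N^(4:ℕ) := by
        have : (4/5:ℝ)^(4:ℕ) * ((100/81) * N)^(4:ℕ) = (80/81)^(4:ℕ) * N^(4:ℕ) := by ring
        rw [this]
        nlinarith [pow_pos hN 4]
      nlinarith [this, hcomp, hvh4]
    have h6 : (4/5:ℝ)^(4:ℕ) * P ≤ hcard^(4:ℕ) :=
      le_of_mul_le_mul_right h5 (pow_pos hv 4)
    have h7 : ((4/5:ℝ) * ∏ i, ((A i).card : ℝ) ^ ((1:ℝ)/4))^(4:ℕ) ≤ hcard^(4:ℕ) := by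
      rw [mul_pow, e1]
      exact h6
    exact (pow_le_pow_iff_left₀ (n := 4) (mul_nonneg (by norm_num) hprod0) hh0.le
      (by norm_num)).1 h7
  · -- goal 2
    have hF0 : ∀ i, (0:ℝ) ≤ (((A i).filter (fun a => a + xx i ∈ Hs)).card : ℝ) :=
      fun i => Nat.cast_nonneg _
    have hprodF : (D 0/(v*((A 0).card:ℝ))) * (D 1/(v*((A 1).card:ℝ)))
        * (D 2/(v*((A 2).card:ℝ))) * (D 3/(v*((A 3).card:ℝ)))
        ≤ (((A 0).filter (fun a => a + xx 0 ∈ Hs)).card : ℝ)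
          * (((A 1).filter (fun a => a + xx 1 ∈ Hs)).card : ℝ)
          * (((A 2).filter (fun a => a + xx 2 ∈ Hs)).card : ℝ)
          * (((A 3).filter (fun a => a + xx 3 ∈ Hs)).card : ℝ) := by
      have hd : ∀ i, (0:ℝ) ≤ D i/(v*((A i).card:ℝ)) :=
        fun i => div_nonneg (hD0 i) (mul_pos hv (ha i)).le
      exact mul_le_mul (mul_le_mul (mul_le_mul (hxx 0) (hxx 1) (hd 1) (hF0 0))
        (hxx 2) (hd 2) (mul_nonneg (hF0 0) (hF0 1))) (hxx 3) (hd 3)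
        (mul_nonneg (mul_nonneg (hF0 0) (hF0 1)) (hF0 2))
    have hcard4 : hcard^(4:ℕ) = N^(4:ℕ)/v^(4:ℕ) := by
      rw [eq_div_iff (pow_ne_zero 4 hv.ne'), ← mul_pow, mul_comm hcard v, hvh]
    have hlhs : (D 0/(v*((A 0).card:ℝ))) * (D 1/(v*((A 1).card:ℝ)))
        * (D 2/(v*((A 2).card:ℝ))) * (D 3/(v*((A 3).card:ℝ)))
        = (D 0 * D 1 * D 2 * D 3) / (v^(4:ℕ) * P) := by
      rw [div_mul_div_comm, div_mul_div_comm, div_mul_div_comm, hP_def]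
      congr 1
      ring
    have h8 : (hcard/(2*K))^(4:ℕ) ≤ (D 0 * D 1 * D 2 * D 3) / (v^(4:ℕ) * P) := by
      rw [div_pow, hcard4, div_div, div_le_div_iff₀ (by positivity) (by positivity)]
      have h9 := mul_le_mul_of_nonneg_right hprodD
        (le_of_lt (mul_pos (pow_pos hv 4) (pow_pos h2K 4)))
      have e : N^(4:ℕ)*P/(2*K)^(4:ℕ) * (v^(4:ℕ)*(2*K)^(4:ℕ))
          = N^(4:ℕ)*(v^(4:ℕ)*P) := by
        field_simp
      rw [e] at h9
      nlinarith [h9]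
    have key4 : (hcard/(2*K))^(4:ℕ)
        ≤ ∏ i, (((A i).filter (fun a => a + xx i ∈ Hs)).card : ℝ) := by
      rw [Fin.prod_univ_four]
      exact le_trans h8 (le_trans (le_of_eq hlhs.symm) hprodF)
    have hq : (∏ i, (((A i).filter (fun a => a + xx i ∈ Hs)).card : ℝ) ^ ((1:ℝ)/4))^(4:ℕ)
        = ∏ i, (((A i).filter (fun a => a + xx i ∈ Hs)).card : ℝ) := by
      rw [← Finset.prod_pow]
      exact Finset.prod_congr rfl fun i _ => quarter_pow _ (hF0 i)
    refine (pow_le_pow_iff_left₀ (n := 4) (div_nonneg hh0.le h2K.le)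
      (Finset.prod_nonneg fun i _ => Real.rpow_nonneg (hF0 i) _) (by norm_num)).1 ?_
    rw [hq]
    exact key4
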